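/- For every real number p with 0 ≤ p ≤ 0.0003, the probability that a random sample of 2500 ballots contains at least 3 erroneous ballots satisfies 1 − (1 − p)^2500 − 2500·p·(1 − p)^2499 − (2500·2499/2)·p^2·(1 − p)^2498 < 0.05. Hence finding 3 ballots with errors in a sample of 2500 gives a lower 95% confidence bound for the ballot error rate of about 0.0003; moreover 0.0003 > 71/339159, the error rate that would suffice to change the 2016 Tasmanian Senate outcome (a 141-vote difference among 339,159 votes). -/

import Mathlib

/-!
The probability `F(p)` of at most two errors among `n` ballots has derivative
`-C(n,2) (n-2) p² (1-p)^(n-3) ≤ 0`, so `F` decreases for `p ≤ 1` and the tail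
`1 - F(p)` is largest at `p = 0.0003`, where `F(0.0003) > 0.95` is a numerical check.
-/

open Set

noncomputable def binomialAtMostTwo (n : ℕ) (p : ℝ) : ℝ :=
  (1 - p) ^ n + n * p * (1 - p) ^ (n - 1) + n.choose 2 * p ^ 2 * (1 - p) ^ (n - 2)

theorem hasDerivAt_binomialAtMostTwo (m : ℕ) (p : ℝ) :
    HasDerivAt (binomialAtMostTwo (m + 3))
      (-((m + 3 : ℕ).choose 2 * (m + 1) * p ^ 2 * (1 - p) ^ m)) p := by
  have hq : HasDerivAt (fun p : ℝ => 1 - p) (-1) p := (hasDerivAt_id p).const_sub 1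
  have hp : HasDerivAt (fun p : ℝ => p) 1 p := hasDerivAt_id p
  have h := ((hq.fun_pow (m + 3)).add
    (((hp.const_mul ((m + 3 : ℕ) : ℝ)).mul (hq.fun_pow (m + 2))))).add
    (((hp.fun_pow 2).const_mul ((m + 3 : ℕ).choose 2 : ℝ)).mul (hq.fun_pow (m + 1)))
  refine h.congr_deriv ?_
  rw [Nat.cast_choose_two]
  push_cast
  ring

theorem antitoneOn_binomialAtMostTwo (m : ℕ) :
    AntitoneOn (binomialAtMostTwo (m + 3)) (Iic 1) :=
  antitoneOn_of_hasDerivWithinAt_nonpos (convex_Iic 1)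
    (fun p _ => (hasDerivAt_binomialAtMostTwo m p).continuousAt.continuousWithinAt)
    (fun p _ => (hasDerivAt_binomialAtMostTwo m p).hasDerivWithinAt)
    (fun p hp => by
      rw [interior_Iic] at hp
      have hq : 0 ≤ 1 - p := sub_nonneg.mpr hp.le
      exact neg_nonpos.mpr (by positivity))

theorem binomialAtMostTwo_add_two (m : ℕ) (p : ℝ) :
    binomialAtMostTwo (m + 2) p =
      (1 - p) ^ m * ((1 - p) ^ 2 + (m + 2) * p * (1 - p) + (m + 2 : ℕ).choose 2 * p ^ 2) := by
  simp only [binomialAtMostTwo, Nat.add_sub_cancel, Nat.add_sub_assoc one_le_two]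
  push_cast
  ring

theorem lt_binomialAtMostTwo_2500 : 0.95 < binomialAtMostTwo 2500 0.0003 := by
  rw [show 2500 = 2498 + 2 from rfl, binomialAtMostTwo_add_two, Nat.cast_choose_two]
  norm_num
  -- `norm_num` does not expand powers this large, but does expand `(x ^ 50) ^ 50`.
  calc (19 / 20 : ℝ) < ((9997 / 10000) ^ 50) ^ 50 * (203031259 / 100000000) := by norm_num
    _ ≤ (9997 / 10000) ^ 2498 * (203031259 / 100000000) := by
      rw [← pow_mul]
      gcongr ?_ * _
      exact pow_le_pow_of_le_one (by norm_num) (by norm_num) (by norm_num)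

/-- For every real `p` with `0 ≤ p ≤ 0.0003`, the probability that a random
sample of 2500 ballots contains at least 3 erroneous ballots satisfies
`1 - (1 - p)^2500 - 2500·p·(1 - p)^2499 - (2500·2499/2)·p²·(1 - p)^2498 < 0.05`.
Hence finding 3 ballots with errors in a sample of 2500 gives a lower 95%
confidence bound of about `0.0003` for the ballot error rate; moreover
`0.0003 > 71/339159`, the rate needed to change the 2016 Tasmanian outcome. -/
theorem lower_confidence_bound_2500 :
    (∀ p : ℝ, 0 ≤ p → p ≤ 0.0003 →
      1 - (1 - p) ^ (2500 : ℕ) - 2500 * p * (1 - p) ^ (2499 : ℕ)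
        - (2500 * 2499 / 2) * p ^ 2 * (1 - p) ^ (2498 : ℕ) < 0.05) ∧
    (0.0003 : ℝ) > 71 / 339159 := by
  refine ⟨fun p _ hp => ?_, by norm_num⟩
  have hF : binomialAtMostTwo 2500 p = (1 - p) ^ 2500 + 2500 * p * (1 - p) ^ 2499
      + (2500 * 2499 / 2) * p ^ 2 * (1 - p) ^ 2498 := by
    simp only [binomialAtMostTwo, Nat.cast_choose_two]
    norm_num
  have hanti : AntitoneOn (binomialAtMostTwo 2500) (Iic 1) := antitoneOn_binomialAtMostTwo 2497
  have hmono : binomialAtMostTwo 2500 0.0003 ≤ binomialAtMostTwo 2500 p :=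
    hanti (mem_Iic.mpr (hp.trans (by norm_num))) (mem_Iic.mpr (by norm_num)) hp
  -- Folding the goal into `binomialAtMostTwo` keeps `linarith` from expanding `(1 - p) ^ 2500`.
  rw [sub_sub, sub_sub, ← add_assoc, ← hF]
  linarith only [hmono, lt_binomialAtMostTwo_2500]
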